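/- arXiv:2309.02046 — 2 statements merged into one kernel-verified Lean document; each statement's English description precedes it below -/
import Mathlib

section
/- Let A ∈ ℝᵐˣⁿ and suppose (1/√m)A satisfies the restricted isometry property of order s+s' with constant δ_{s+s'} ∈ (0,1). Then for any disjoint subsets S, T ⊆ [n] with |S| ≤ s and |T| ≤ s', one has ‖(1/m) A_Sᵀ A_T‖ ≤ δ_{s+s'}, where ‖·‖ is the spectral norm. -/
/-!
Polarization: for `u ⟂ v` with `‖u‖ = ‖v‖` the vectors `u ± v` have the same norm, and
`4 ⟨Au, Av⟩ = ‖A(u + v)‖² - ‖A(u - v)‖²`. When `u` and `v` have disjoint supports of sizes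
at most `s` and `s'`, the vectors `u ± v` are `(s + s')`-sparse, so RIP pins both squared norms
into `[(1 - δ) ‖u ± v‖², (1 + δ) ‖u ± v‖²]`, and their difference is at most `4 δ ‖u‖²`.
Rescaling `u` and `v` to equal norms gives the bound in general.
-/

open Finset Matrix

variable {ι κ : Type*} [Fintype ι] [Fintype κ]

/-- RIP of order `k` with constant `δ` for `(1/√m) A` says this holds with `c = 1/m` for every
`k`-sparse `w`. -/
def IsNearIsometryAt (A : Matrix κ ι ℝ) (c δ : ℝ) (w : ι → ℝ) : Prop :=
  (1 - δ) * (w ⬝ᵥ w) ≤ c * (A *ᵥ w ⬝ᵥ A *ᵥ w) ∧ c * (A *ᵥ w ⬝ᵥ A *ᵥ w) ≤ (1 + δ) * (w ⬝ᵥ w)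

section Support

variable {S T : Finset ι} {u v : ι → ℝ}

lemma dotProduct_eq_zero_of_disjoint_support (hST : Disjoint S T)
    (hu : ∀ i, u i ≠ 0 → i ∈ S) (hv : ∀ i, v i ≠ 0 → i ∈ T) : u ⬝ᵥ v = 0 := by
  refine Finset.sum_eq_zero fun i _ => ?_
  by_contra h
  obtain ⟨hui, hvi⟩ := mul_ne_zero_iff.mp h
  exact Finset.disjoint_left.mp hST (hu i hui) (hv i hvi)

lemma ncard_support_smul_add_smul_le (hu : ∀ i, u i ≠ 0 → i ∈ S) (hv : ∀ i, v i ≠ 0 → i ∈ T)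
    (a b : ℝ) : {i | (a • u + b • v) i ≠ 0}.ncard ≤ #S + #T := by
  have hsub : {i | (a • u + b • v) i ≠ 0} ⊆ (S : Set ι) ∪ T := by
    intro i hi
    by_contra hiST
    simp only [Set.mem_union, mem_coe, not_or] at hiST
    have hui : u i = 0 := by_contra fun h => hiST.1 (hu i h)
    have hvi : v i = 0 := by_contra fun h => hiST.2 (hv i h)
    simp [hui, hvi] at hi
  calc {i | (a • u + b • v) i ≠ 0}.ncard ≤ ((S : Set ι) ∪ T).ncard :=
        Set.ncard_le_ncard hsub (Set.toFinite _)
    _ ≤ (S : Set ι).ncard + (T : Set ι).ncard := Set.ncard_union_le _ _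
    _ = #S + #T := by rw [Set.ncard_coe_finset, Set.ncard_coe_finset]

end Support

section Polarization

variable {A : Matrix κ ι ℝ} {c δ : ℝ} {x y : ι → ℝ}

lemma abs_mul_dotProduct_mulVec_le_of_orthogonal (hxy : x ⬝ᵥ y = 0) (hxx : x ⬝ᵥ x = y ⬝ᵥ y)
    (hadd : IsNearIsometryAt A c δ (x + y)) (hsub : IsNearIsometryAt A c δ (x - y)) :
    |c * (A *ᵥ x ⬝ᵥ A *ᵥ y)| ≤ δ * (x ⬝ᵥ x) := by
  have hyx : y ⬝ᵥ x = 0 := dotProduct_comm y x ▸ hxy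
  have hnorm_add : (x + y) ⬝ᵥ (x + y) = 2 * (x ⬝ᵥ x) := by
    simp only [add_dotProduct, dotProduct_add, hxy, hyx, ← hxx]; ring
  have hnorm_sub : (x - y) ⬝ᵥ (x - y) = 2 * (x ⬝ᵥ x) := by
    simp only [sub_dotProduct, dotProduct_sub, hxy, hyx, ← hxx]; ring
  have hpolar : A *ᵥ (x + y) ⬝ᵥ A *ᵥ (x + y) - A *ᵥ (x - y) ⬝ᵥ A *ᵥ (x - y)
      = 4 * (A *ᵥ x ⬝ᵥ A *ᵥ y) := by
    simp only [mulVec_add, mulVec_sub, add_dotProduct, dotProduct_add, sub_dotProduct,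
      dotProduct_sub, dotProduct_comm (A *ᵥ y) (A *ᵥ x)]
    ring
  obtain ⟨hadd_lo, hadd_hi⟩ := hadd
  obtain ⟨hsub_lo, hsub_hi⟩ := hsub
  rw [hnorm_add] at hadd_lo hadd_hi
  rw [hnorm_sub] at hsub_lo hsub_hi
  have hc := congrArg (c * ·) hpolar
  simp only [mul_sub] at hc
  rw [abs_le]
  constructor <;> linarith

lemma abs_mul_dotProduct_mulVec_le (hxy : x ⬝ᵥ y = 0)
    (h : ∀ a b : ℝ, IsNearIsometryAt A c δ (a • x + b • y)) :
    |c * (A *ᵥ x ⬝ᵥ A *ᵥ y)| ≤ δ * √(x ⬝ᵥ x) * √(y ⬝ᵥ y) := by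
  by_cases hx : x = 0
  · simp [hx]
  by_cases hy : y = 0
  · simp [hy]
  have hx_pos : 0 < x ⬝ᵥ x := by simpa using dotProduct_self_star_pos_iff.mpr hx
  have hy_pos : 0 < y ⬝ᵥ y := by simpa using dotProduct_self_star_pos_iff.mpr hy
  set a := √(x ⬝ᵥ x)
  set b := √(y ⬝ᵥ y)
  have hxa : x ⬝ᵥ x = a * a := (Real.mul_self_sqrt hx_pos.le).symm
  have hyb : y ⬝ᵥ y = b * b := (Real.mul_self_sqrt hy_pos.le).symm
  have ha : 0 < a := Real.sqrt_pos.mpr hx_pos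
  have hb : 0 < b := Real.sqrt_pos.mpr hy_pos
  have hscaled := abs_mul_dotProduct_mulVec_le_of_orthogonal (A := A) (c := c) (δ := δ)
    (x := b • x) (y := a • y) (by simp [hxy])
    (by simp only [smul_dotProduct, dotProduct_smul, smul_eq_mul, hxa, hyb]; ring)
    (h b a) (by simpa [sub_eq_add_neg] using h b (-a))
  simp only [mulVec_smul, smul_dotProduct, dotProduct_smul, smul_eq_mul, hxa] at hscaled
  have hmul : |c * (A *ᵥ x ⬝ᵥ A *ᵥ y)| * (a * b) ≤ δ * a * b * (a * b) :=
    calc |c * (A *ᵥ x ⬝ᵥ A *ᵥ y)| * (a * b) = |c * (a * (b * (A *ᵥ x ⬝ᵥ A *ᵥ y)))| := by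
          rw [abs_mul, abs_mul c, abs_mul a, abs_mul b, abs_of_pos ha, abs_of_pos hb]; ring
      _ ≤ δ * (b * (b * (a * a))) := hscaled
      _ = δ * a * b * (a * b) := by ring
  exact le_of_mul_le_mul_right hmul (mul_pos ha hb)

end Polarization

theorem stmt_6_general {m n : ℕ} (A : Matrix (Fin m) (Fin n) ℝ) (s s' : ℕ) (δ : ℝ)
    (hRIP : ∀ x : Fin n → ℝ, {i | x i ≠ 0}.ncard ≤ s + s' →
      (1 - δ) * (∑ j, x j ^ 2) ≤ (1 / (m : ℝ)) * ∑ i, (A.mulVec x i) ^ 2 ∧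
      (1 / (m : ℝ)) * ∑ i, (A.mulVec x i) ^ 2 ≤ (1 + δ) * (∑ j, x j ^ 2))
    (S T : Finset (Fin n)) (hST : Disjoint S T) (hS : S.card ≤ s) (hT : T.card ≤ s') :
    ∀ u v : Fin n → ℝ, (∀ i, u i ≠ 0 → i ∈ S) → (∀ i, v i ≠ 0 → i ∈ T) →
      |(1 / (m : ℝ)) * ∑ i, A.mulVec u i * A.mulVec v i|
        ≤ δ * Real.sqrt (∑ j, u j ^ 2) * Real.sqrt (∑ j, v j ^ 2) := by
  intro u v hu hv
  have hsum_sq {k : ℕ} (w : Fin k → ℝ) : ∑ j, w j ^ 2 = w ⬝ᵥ w := by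
    simp only [sq, dotProduct]
  have hnear (a b : ℝ) : IsNearIsometryAt A (1 / m) δ (a • u + b • v) := by
    simpa only [hsum_sq, IsNearIsometryAt] using
      hRIP _ ((ncard_support_smul_add_smul_le hu hv a b).trans (add_le_add hS hT))
  rw [hsum_sq u, hsum_sq v]
  exact abs_mul_dotProduct_mulVec_le (dotProduct_eq_zero_of_disjoint_support hST hu hv) hnear

/-- If `(1/√m)A` satisfies the RIP of order `s+s'` with constant `δ ∈ (0,1)`, then for any
disjoint `S, T ⊆ [n]` with `|S| ≤ s`, `|T| ≤ s'`, the spectral norm bound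
`‖(1/m) A_Sᵀ A_T‖ ≤ δ` holds, stated in the equivalent bilinear form
`|(1/m) ⟨Au, Av⟩| ≤ δ ‖u‖ ‖v‖` for all `u` supported in `S` and `v` supported in `T`. -/
theorem stmt_6 {m n : ℕ} (A : Matrix (Fin m) (Fin n) ℝ) (s s' : ℕ) (δ : ℝ)
    (hδ : 0 < δ ∧ δ < 1)
    (hRIP : ∀ x : Fin n → ℝ, {i | x i ≠ 0}.ncard ≤ s + s' →
      (1 - δ) * (∑ j, x j ^ 2) ≤ (1 / (m : ℝ)) * ∑ i, (A.mulVec x i) ^ 2 ∧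
      (1 / (m : ℝ)) * ∑ i, (A.mulVec x i) ^ 2 ≤ (1 + δ) * (∑ j, x j ^ 2))
    (S T : Finset (Fin n)) (hST : Disjoint S T) (hS : S.card ≤ s) (hT : T.card ≤ s') :
    ∀ u v : Fin n → ℝ, (∀ i, u i ≠ 0 → i ∈ S) → (∀ i, v i ≠ 0 → i ∈ T) →
      |(1 / (m : ℝ)) * ∑ i, A.mulVec u i * A.mulVec v i|
        ≤ δ * Real.sqrt (∑ j, u j ^ 2) * Real.sqrt (∑ j, v j ^ 2) :=
  stmt_6_general A s s' δ hRIP S T hST hS hT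
end

section
/- Let M ∈ ℝⁿˣⁿ be symmetric with all eigenvalues in the interval [α, β] where 0 < α ≤ β. Let S, T ⊆ [n] be disjoint index sets. Then the spectral norm of the off-diagonal block satisfies ‖M_{S,T}‖ ≤ max{β − c, c − α} for every real c; in particular, taking c = (α+β)/2 gives ‖M_{S,T}‖ ≤ (β − α)/2. -/
/-!
For `u`, `v` with disjoint supports, `u + v` and `u - v` both have squared norm
`‖u‖² + ‖v‖²`, so polarization `4 uᵀMv = (u+v)ᵀM(u+v) - (u-v)ᵀM(u-v)` puts `4 uᵀMv` in
`[-(β - α)(‖u‖² + ‖v‖²), (β - α)(‖u‖² + ‖v‖²)]`. Rescaling `u ↦ ‖v‖ u`, `v ↦ ‖u‖ v` turns this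
into `|uᵀMv| ≤ (β - α)/2 ‖u‖‖v‖`, and `(β - α)/2`, the mean of `β - c` and `c - α`, is at most
their maximum.
-/

open Finset Matrix
open scoped RealInnerProductSpace

section SymmetricMap

variable {E : Type*} [NormedAddCommGroup E] [InnerProductSpace ℝ E] {T : E →ₗ[ℝ] E}

theorem LinearMap.IsSymmetric.real_inner_map_polarization (hT : T.IsSymmetric) (x y : E) :
    ⟪T (x + y), x + y⟫ - ⟪T (x - y), x - y⟫ = 4 * ⟪T x, y⟫ := by
  simp only [map_add, map_sub, inner_add_left, inner_add_right, inner_sub_left, inner_sub_right,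
    hT y x, real_inner_comm (T x) y]
  ring

theorem LinearMap.IsSymmetric.four_mul_abs_inner_map_le {α β : ℝ} (hT : T.IsSymmetric)
    (hT_bounds : ∀ w, α * ‖w‖ ^ 2 ≤ ⟪T w, w⟫ ∧ ⟪T w, w⟫ ≤ β * ‖w‖ ^ 2)
    {x y : E} (hxy : ⟪x, y⟫ = 0) :
    4 * |⟪T x, y⟫| ≤ (β - α) * (‖x‖ ^ 2 + ‖y‖ ^ 2) := by
  have hadd : ‖x + y‖ ^ 2 = ‖x‖ ^ 2 + ‖y‖ ^ 2 := by
    simp only [sq, norm_add_sq_eq_norm_sq_add_norm_sq_real hxy]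
  have hsub : ‖x - y‖ ^ 2 = ‖x‖ ^ 2 + ‖y‖ ^ 2 := by
    simp only [sq, norm_sub_sq_eq_norm_sq_add_norm_sq_real hxy]
  obtain ⟨hadd_lo, hadd_hi⟩ := hT_bounds (x + y)
  obtain ⟨hsub_lo, hsub_hi⟩ := hT_bounds (x - y)
  rw [hadd] at hadd_lo hadd_hi
  rw [hsub] at hsub_lo hsub_hi
  rw [← abs_of_pos (four_pos : (0 : ℝ) < 4), ← abs_mul, ← hT.real_inner_map_polarization, abs_le]
  constructor <;> linarith

theorem LinearMap.IsSymmetric.abs_inner_map_le {α β : ℝ} (hT : T.IsSymmetric)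
    (hT_bounds : ∀ w, α * ‖w‖ ^ 2 ≤ ⟪T w, w⟫ ∧ ⟪T w, w⟫ ≤ β * ‖w‖ ^ 2)
    {x y : E} (hxy : ⟪x, y⟫ = 0) :
    |⟪T x, y⟫| ≤ (β - α) / 2 * ‖x‖ * ‖y‖ := by
  rcases eq_or_lt_of_le (mul_nonneg (norm_nonneg x) (norm_nonneg y)) with hzero | hpos
  · rcases mul_eq_zero.mp hzero.symm with hx | hy
    · simp [norm_eq_zero.mp hx]
    · simp [norm_eq_zero.mp hy]
  have hscaled := hT.four_mul_abs_inner_map_le hT_bounds (x := ‖y‖ • x) (y := ‖x‖ • y)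
    (by rw [real_inner_smul_left, real_inner_smul_right, hxy, mul_zero, mul_zero])
  rw [map_smul, real_inner_smul_left, real_inner_smul_right, norm_smul, norm_smul, norm_norm,
    norm_norm, abs_mul, abs_mul, abs_norm, abs_norm] at hscaled
  nlinarith

end SymmetricMap

variable {ι : Type*} [Fintype ι]

theorem EuclideanSpace.norm_toLp_real (x : ι → ℝ) : ‖WithLp.toLp 2 x‖ = √(∑ i, x i ^ 2) := by
  rw [EuclideanSpace.norm_eq]
  simp

theorem Matrix.inner_toEuclideanLin_toLp [DecidableEq ι] (M : Matrix ι ι ℝ) (x y : ι → ℝ) :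
    ⟪toEuclideanLin M (WithLp.toLp 2 x), WithLp.toLp 2 y⟫ = y ⬝ᵥ M *ᵥ x := by
  simp [EuclideanSpace.inner_toLp_toLp]

theorem Matrix.dotProduct_eq_zero_of_disjoint {S T : Finset ι} (hST : Disjoint S T) {u v : ι → ℝ}
    (hu : ∀ i, u i ≠ 0 → i ∈ S) (hv : ∀ i, v i ≠ 0 → i ∈ T) : u ⬝ᵥ v = 0 := by
  refine Finset.sum_eq_zero fun i _ => ?_
  by_contra h
  obtain ⟨hui, hvi⟩ := mul_ne_zero_iff.mp h
  exact Finset.disjoint_left.mp hST (hu i hui) (hv i hvi)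

theorem Matrix.IsSymm.abs_dotProduct_mulVec_le [DecidableEq ι] {M : Matrix ι ι ℝ} (hM : M.IsSymm)
    {α β : ℝ} (hquad : ∀ v : ι → ℝ,
      α * (∑ i, v i ^ 2) ≤ v ⬝ᵥ M *ᵥ v ∧ v ⬝ᵥ M *ᵥ v ≤ β * (∑ i, v i ^ 2))
    {u v : ι → ℝ} (huv : u ⬝ᵥ v = 0) :
    |u ⬝ᵥ M *ᵥ v| ≤ (β - α) / 2 * √(∑ i, u i ^ 2) * √(∑ i, v i ^ 2) := by
  have hT : (toEuclideanLin M).IsSymmetric :=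
    isSymmetric_toEuclideanLin_iff.mpr (isHermitian_iff_isSymm.mpr hM)
  have hT_bounds (w : EuclideanSpace ℝ ι) : α * ‖w‖ ^ 2 ≤ ⟪toEuclideanLin M w, w⟫ ∧
      ⟪toEuclideanLin M w, w⟫ ≤ β * ‖w‖ ^ 2 := by
    rw [← WithLp.toLp_ofLp (p := 2) w, inner_toEuclideanLin_toLp, EuclideanSpace.norm_toLp_real,
      Real.sq_sqrt (by positivity)]
    exact hquad _
  have horth : ⟪WithLp.toLp 2 v, WithLp.toLp 2 u⟫ = 0 := by
    rw [EuclideanSpace.inner_toLp_toLp, star_trivial, huv]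
  have := hT.abs_inner_map_le hT_bounds horth
  rwa [inner_toEuclideanLin_toLp, EuclideanSpace.norm_toLp_real, EuclideanSpace.norm_toLp_real,
    mul_right_comm] at this

theorem stmt_16_general {n : ℕ} (M : Matrix (Fin n) (Fin n) ℝ) (hM : M.IsSymm)
    (α β : ℝ)
    (hquad : ∀ v : Fin n → ℝ,
      α * (∑ i, v i ^ 2) ≤ v ⬝ᵥ M.mulVec v ∧ v ⬝ᵥ M.mulVec v ≤ β * (∑ i, v i ^ 2))
    (S T : Finset (Fin n)) (hST : Disjoint S T) :
    (∀ c : ℝ, ∀ u v : Fin n → ℝ, (∀ i, u i ≠ 0 → i ∈ S) → (∀ i, v i ≠ 0 → i ∈ T) →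
      |u ⬝ᵥ M.mulVec v| ≤ max (β - c) (c - α) *
        Real.sqrt (∑ i, u i ^ 2) * Real.sqrt (∑ i, v i ^ 2)) ∧
    (∀ u v : Fin n → ℝ, (∀ i, u i ≠ 0 → i ∈ S) → (∀ i, v i ≠ 0 → i ∈ T) →
      |u ⬝ᵥ M.mulVec v| ≤ (β - α) / 2 *
        Real.sqrt (∑ i, u i ^ 2) * Real.sqrt (∑ i, v i ^ 2)) := by
  have hblock (u v : Fin n → ℝ) (hu : ∀ i, u i ≠ 0 → i ∈ S) (hv : ∀ i, v i ≠ 0 → i ∈ T) :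
      |u ⬝ᵥ M *ᵥ v| ≤ (β - α) / 2 * √(∑ i, u i ^ 2) * √(∑ i, v i ^ 2) :=
    hM.abs_dotProduct_mulVec_le hquad (dotProduct_eq_zero_of_disjoint hST hu hv)
  refine ⟨fun c u v hu hv => (hblock u v hu hv).trans ?_, hblock⟩
  have hhalf : (β - α) / 2 ≤ max (β - c) (c - α) := by
    rcases le_total c ((α + β) / 2) with h | h
    · exact le_max_of_le_left (by linarith)
    · exact le_max_of_le_right (by linarith)
  gcongr

/-- Off-diagonal block bound: if symmetric `M` has all eigenvalues in `[α, β]`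
(encoded by `α‖v‖² ≤ vᵀMv ≤ β‖v‖²`), and `S, T` are disjoint index sets, then for every
`c`, `‖M_{S,T}‖ ≤ max{β − c, c − α}` (spectral norm, stated in bilinear form over vectors
supported in `S` resp. `T`); in particular with `c = (α+β)/2`, `‖M_{S,T}‖ ≤ (β−α)/2`. -/
theorem stmt_16 {n : ℕ} (M : Matrix (Fin n) (Fin n) ℝ) (hM : M.IsSymm)
    (α β : ℝ) (hαβ : 0 < α ∧ α ≤ β)
    (hquad : ∀ v : Fin n → ℝ,
      α * (∑ i, v i ^ 2) ≤ v ⬝ᵥ M.mulVec v ∧ v ⬝ᵥ M.mulVec v ≤ β * (∑ i, v i ^ 2))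
    (S T : Finset (Fin n)) (hST : Disjoint S T) :
    (∀ c : ℝ, ∀ u v : Fin n → ℝ, (∀ i, u i ≠ 0 → i ∈ S) → (∀ i, v i ≠ 0 → i ∈ T) →
      |u ⬝ᵥ M.mulVec v| ≤ max (β - c) (c - α) *
        Real.sqrt (∑ i, u i ^ 2) * Real.sqrt (∑ i, v i ^ 2)) ∧
    (∀ u v : Fin n → ℝ, (∀ i, u i ≠ 0 → i ∈ S) → (∀ i, v i ≠ 0 → i ∈ T) →
      |u ⬝ᵥ M.mulVec v| ≤ (β - α) / 2 *
        Real.sqrt (∑ i, u i ^ 2) * Real.sqrt (∑ i, v i ^ 2)) :=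
  stmt_16_general M hM α β hquad S T hST
end
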